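/- arXiv:2002.12398 — 5 statements merged into one kernel-verified Lean document; each statement's English description precedes it below -/
import Mathlib

section
/- (Extended Neyman–Pearson lemma) Let ε₀ and ε₁ be random variables with densities f₀ and f₁ with respect to a measure μ, let Λ = f₁/f₀, and let h : Z → [0,1] be measurable. Fix t ≥ 0 and a measurable set S with {z : Λ(z) < t} ⊆ S ⊆ {z : Λ(z) ≤ t}. If E[h(ε₀)] ≥ P₀(S), then E[h(ε₁)] ≥ P₁(S). -/
open MeasureTheory ENNReal

/-! Split `∫_S f` as `∫_S h f + ∫_S (1 - h) f`. The hypothesis on `f₀` then says that the mass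
`∫_S (1 - h) f₀` that `h` misses on `S` is paid back by `∫_{Sᶜ} h f₀`. Since `f₁ ≤ t f₀` on `S`
and `f₁ ≥ t f₀` off `S`, multiplying by `t` transfers this to `f₁`:
`∫_S (1 - h) f₁ ≤ t ∫_S (1 - h) f₀ ≤ t ∫_{Sᶜ} h f₀ ≤ ∫_{Sᶜ} h f₁`, which is the claim for `f₁`. -/

section NeymanPearson

variable {Z : Type*} [MeasurableSpace Z] {μ : Measure Z} {h f : Z → ℝ≥0∞} {S : Set Z}

theorem lintegral_eq_lintegral_mul_add_lintegral_one_sub_mul (hh : Measurable h)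
    (hh1 : ∀ z, h z ≤ 1) (hf : Measurable f) (ν : Measure Z) :
    ∫⁻ z, f z ∂ν = ∫⁻ z, h z * f z ∂ν + ∫⁻ z, (1 - h z) * f z ∂ν := by
  rw [← lintegral_add_left (f := fun z => h z * f z) (hh.mul hf)]
  congr 1 with z
  rw [← add_mul, add_tsub_cancel_of_le (hh1 z), one_mul]

theorem setLIntegral_one_sub_mul_le_compl (hS : MeasurableSet S) (hh : Measurable h)
    (hh1 : ∀ z, h z ≤ 1) (hf : Measurable f) (hfin : ∫⁻ z in S, f z ∂μ ≠ ∞)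
    (hle : ∫⁻ z in S, f z ∂μ ≤ ∫⁻ z, h z * f z ∂μ) :
    ∫⁻ z in S, (1 - h z) * f z ∂μ ≤ ∫⁻ z in Sᶜ, h z * f z ∂μ := by
  have hfin' : ∫⁻ z in S, h z * f z ∂μ ≠ ∞ :=
    ne_top_of_le_ne_top hfin <| lintegral_mono fun z => mul_le_of_le_one_left' (hh1 z)
  rw [← lintegral_add_compl (fun z => h z * f z) hS,
    lintegral_eq_lintegral_mul_add_lintegral_one_sub_mul hh hh1 hf] at hle
  exact (ENNReal.add_le_add_iff_left hfin').1 hle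

theorem setLIntegral_le_lintegral_mul_of_one_sub_mul_le_compl (hS : MeasurableSet S)
    (hh : Measurable h) (hh1 : ∀ z, h z ≤ 1) (hf : Measurable f)
    (hle : ∫⁻ z in S, (1 - h z) * f z ∂μ ≤ ∫⁻ z in Sᶜ, h z * f z ∂μ) :
    ∫⁻ z in S, f z ∂μ ≤ ∫⁻ z, h z * f z ∂μ := by
  rw [← lintegral_add_compl (fun z => h z * f z) hS,
    lintegral_eq_lintegral_mul_add_lintegral_one_sub_mul hh hh1 hf]
  gcongr

theorem setLIntegral_le_lintegral_mul_of_threshold {f₀ f₁ : Z → ℝ≥0∞} {t : ℝ≥0∞}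
    (hS : MeasurableSet S) (hh : Measurable h) (hh1 : ∀ z, h z ≤ 1)
    (hf₀ : Measurable f₀) (hf₁ : Measurable f₁) (hfin : ∫⁻ z in S, f₀ z ∂μ ≠ ∞)
    (hS_le : ∀ᵐ z ∂μ.restrict S, f₁ z ≤ t * f₀ z) (hSc_ge : ∀ z ∉ S, t * f₀ z ≤ f₁ z)
    (hyp : ∫⁻ z in S, f₀ z ∂μ ≤ ∫⁻ z, h z * f₀ z ∂μ) :
    ∫⁻ z in S, f₁ z ∂μ ≤ ∫⁻ z, h z * f₁ z ∂μ := by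
  refine setLIntegral_le_lintegral_mul_of_one_sub_mul_le_compl hS hh hh1 hf₁ ?_
  calc ∫⁻ z in S, (1 - h z) * f₁ z ∂μ
      ≤ ∫⁻ z in S, (1 - h z) * (t * f₀ z) ∂μ :=
        lintegral_mono_ae <| hS_le.mono fun z hz => mul_le_mul_right hz _
    _ = t * ∫⁻ z in S, (1 - h z) * f₀ z ∂μ := by
        rw [← lintegral_const_mul _ (f := fun z => (1 - h z) * f₀ z)
          ((measurable_const.sub hh).mul hf₀)]
        congr 1 with z
        ring
    _ ≤ t * ∫⁻ z in Sᶜ, h z * f₀ z ∂μ :=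
        mul_le_mul_right (setLIntegral_one_sub_mul_le_compl hS hh hh1 hf₀ hfin hyp) _
    _ = ∫⁻ z in Sᶜ, h z * (t * f₀ z) ∂μ := by
        rw [← lintegral_const_mul _ (f := fun z => h z * f₀ z) (hh.mul hf₀)]
        congr 1 with z
        ring
    _ ≤ ∫⁻ z in Sᶜ, h z * f₁ z ∂μ :=
        setLIntegral_mono (hh.mul hf₁) fun z hz => mul_le_mul_right (hSc_ge z hz) _

end NeymanPearson

theorem stmt_2_general {Z : Type*} [MeasurableSpace Z] (μ : Measure Z)
    (f₀ f₁ : Z → ℝ≥0∞) (hf₀ : Measurable f₀) (hf₁ : Measurable f₁)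
    (hprob₀ : ∫⁻ z, f₀ z ∂μ = 1)
    (h : Z → ℝ≥0∞) (hh : Measurable h) (hh1 : ∀ z, h z ≤ 1)
    (Λ : Z → ℝ≥0∞) (hΛ : Λ = fun z => f₁ z / f₀ z)
    (t : NNReal) (S : Set Z) (hS : MeasurableSet S)
    (hS1 : {z | Λ z < (t : ℝ≥0∞)} ⊆ S) (hS2 : S ⊆ {z | Λ z ≤ (t : ℝ≥0∞)})
    (hyp : ∫⁻ z in S, f₀ z ∂μ ≤ ∫⁻ z, h z * f₀ z ∂μ) :
    ∫⁻ z in S, f₁ z ∂μ ≤ ∫⁻ z, h z * f₁ z ∂μ := by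
  subst hΛ
  have hfin : ∫⁻ z in S, f₀ z ∂μ ≠ ∞ :=
    ne_top_of_le_ne_top (hprob₀ ▸ one_ne_top) (setLIntegral_le_lintegral S f₀)
  -- Finiteness of `f₀` is needed: where `f₀ = ∞` and `t = 0`, `f₁ / f₀ = 0 ≤ t` but `t * f₀ = 0`.
  have hS_le : ∀ᵐ z ∂μ.restrict S, f₁ z ≤ t * f₀ z := by
    filter_upwards [ae_lt_top hf₀ hfin, ae_restrict_mem hS] with z hz_fin hzS
    exact (ENNReal.div_le_iff_le_mul (Or.inr coe_ne_top) (Or.inl hz_fin.ne)).1 (hS2 hzS)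
  have hSc_ge : ∀ z ∉ S, (t : ℝ≥0∞) * f₀ z ≤ f₁ z := fun z hz =>
    mul_le_of_le_div (not_lt.1 fun hlt => hz (hS1 hlt))
  exact setLIntegral_le_lintegral_mul_of_threshold hS hh hh1 hf₀ hf₁ hfin hS_le hSc_ge hyp

/-- extended Neyman–Pearson lemma (lower-bound version). -/
theorem stmt_2 {Z : Type*} [MeasurableSpace Z] (μ : Measure Z)
    (f₀ f₁ : Z → ℝ≥0∞) (hf₀ : Measurable f₀) (hf₁ : Measurable f₁)
    (hprob₀ : ∫⁻ z, f₀ z ∂μ = 1) (hprob₁ : ∫⁻ z, f₁ z ∂μ = 1)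
    (h : Z → ℝ≥0∞) (hh : Measurable h) (hh1 : ∀ z, h z ≤ 1)
    (Λ : Z → ℝ≥0∞) (hΛ : Λ = fun z => f₁ z / f₀ z)
    (t : NNReal) (S : Set Z) (hS : MeasurableSet S)
    (hS1 : {z | Λ z < (t : ℝ≥0∞)} ⊆ S) (hS2 : S ⊆ {z | Λ z ≤ (t : ℝ≥0∞)})
    (hyp : ∫⁻ z in S, f₀ z ∂μ ≤ ∫⁻ z, h z * f₀ z ∂μ) :
    ∫⁻ z in S, f₁ z ∂μ ≤ ∫⁻ z, h z * f₁ z ∂μ :=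
  stmt_2_general μ f₀ f₁ hf₀ hf₁ hprob₀ h hh hh1 Λ hΛ t S hS hS1 hS2 hyp
end

section
/- (Extended Neyman–Pearson lemma, upper bound version) Let ε₀ and ε₁ be random variables with densities f₀ and f₁ with respect to a measure μ, let Λ = f₁/f₀, and let h : Z → [0,1] be measurable. Fix t ≥ 0 and a measurable set S with {z : Λ(z) ≤ t}ᶜ ⊆ S ⊆ {z : Λ(z) < t}ᶜ. If E[h(ε₀)] ≤ P₀(S), then E[h(ε₁)] ≤ P₁(S). -/
open MeasureTheory ENNReal

/-- extended Neyman–Pearson lemma (upper-bound version). -/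
theorem stmt_3 {Z : Type*} [MeasurableSpace Z] (μ : Measure Z)
    (f₀ f₁ : Z → ℝ≥0∞) (hf₀ : Measurable f₀) (hf₁ : Measurable f₁)
    (hprob₀ : ∫⁻ z, f₀ z ∂μ = 1) (hprob₁ : ∫⁻ z, f₁ z ∂μ = 1)
    (h : Z → ℝ≥0∞) (hh : Measurable h) (hh1 : ∀ z, h z ≤ 1)
    (Λ : Z → ℝ≥0∞) (hΛ : Λ = fun z => f₁ z / f₀ z)
    (t : NNReal) (S : Set Z) (hS : MeasurableSet S)
    (hS1 : {z | Λ z ≤ (t : ℝ≥0∞)}ᶜ ⊆ S) (hS2 : S ⊆ {z | Λ z < (t : ℝ≥0∞)}ᶜ)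
    (hyp : ∫⁻ z, h z * f₀ z ∂μ ≤ ∫⁻ z in S, f₀ z ∂μ) :
    ∫⁻ z, h z * f₁ z ∂μ ≤ ∫⁻ z in S, f₁ z ∂μ := by
  subst hΛ
  -- pointwise a.e. inequality
  have hae : ∀ᵐ z ∂μ,
      h z * f₁ z + t * S.indicator f₀ z ≤ S.indicator f₁ z + t * (h z * f₀ z) := by
    have hfin : ∀ᵐ z ∂μ, f₀ z < ∞ := ae_lt_top hf₀ (by simp [hprob₀])
    filter_upwards [hfin] with z hz
    by_cases hzS : z ∈ S
    · -- on S : t * f₀ z ≤ f₁ z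
      have hΛge : (t : ℝ≥0∞) ≤ f₁ z / f₀ z := not_lt.mp (hS2 hzS)
      have key : (t : ℝ≥0∞) * f₀ z ≤ f₁ z := by
        rcases eq_or_ne (f₀ z) 0 with h0 | h0
        · simp [h0]
        · exact (ENNReal.le_div_iff_mul_le (Or.inl h0) (Or.inl hz.ne)).mp hΛge
      simp only [Set.indicator_of_mem hzS]
      have h1 : h z + (1 - h z) = 1 := add_tsub_cancel_of_le (hh1 z)
      calc h z * f₁ z + t * f₀ z
          = h z * f₁ z + (h z + (1 - h z)) * ((t : ℝ≥0∞) * f₀ z) := by rw [h1, one_mul]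
        _ = h z * f₁ z + ((1 - h z) * ((t : ℝ≥0∞) * f₀ z) + (t : ℝ≥0∞) * (h z * f₀ z)) := by
            ring
        _ ≤ h z * f₁ z + ((1 - h z) * f₁ z + (t : ℝ≥0∞) * (h z * f₀ z)) := by
            gcongr
        _ = (h z + (1 - h z)) * f₁ z + (t : ℝ≥0∞) * (h z * f₀ z) := by ring
        _ = f₁ z + (t : ℝ≥0∞) * (h z * f₀ z) := by rw [h1, one_mul]
    · -- off S : f₁ z ≤ t * f₀ z
      have hΛle : f₁ z / f₀ z ≤ (t : ℝ≥0∞) := by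
        by_contra hcon
        exact hzS (hS1 hcon)
      have key : f₁ z ≤ (t : ℝ≥0∞) * f₀ z := by
        rcases eq_or_ne (f₁ z) 0 with h1 | h1
        · simp [h1]
        · have h0 : f₀ z ≠ 0 := by
            intro h0
            rw [h0, ENNReal.div_zero h1] at hΛle
            exact (coe_lt_top (r := t)).not_ge hΛle
          exact (ENNReal.div_le_iff_le_mul (Or.inl h0) (Or.inl hz.ne)).mp hΛle
      simp only [Set.indicator_of_notMem hzS, mul_zero, add_zero, zero_add]
      calc h z * f₁ z ≤ h z * ((t : ℝ≥0∞) * f₀ z) := by gcongr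
        _ = (t : ℝ≥0∞) * (h z * f₀ z) := by ring
  have hint := lintegral_mono_ae hae
  have m1 : Measurable fun z => h z * f₁ z := hh.mul hf₁
  have m0 : Measurable fun z => h z * f₀ z := hh.mul hf₀
  rw [lintegral_add_left m1, lintegral_add_left (hf₁.indicator hS),
    lintegral_const_mul _ (hf₀.indicator hS), lintegral_const_mul _ m0,
    lintegral_indicator hS f₀, lintegral_indicator hS f₁] at hint
  have hfinS : (t : ℝ≥0∞) * ∫⁻ z in S, f₀ z ∂μ ≠ ∞ := by
    have : ∫⁻ z in S, f₀ z ∂μ ≤ 1 := hprob₀ ▸ setLIntegral_le_lintegral S f₀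
    exact ENNReal.mul_ne_top coe_ne_top (this.trans_lt one_lt_top).ne
  have h2 : (∫⁻ z, h z * f₁ z ∂μ) + (t : ℝ≥0∞) * ∫⁻ z in S, f₀ z ∂μ
      ≤ (∫⁻ z in S, f₁ z ∂μ) + (t : ℝ≥0∞) * ∫⁻ z in S, f₀ z ∂μ := by
    refine hint.trans ?_
    gcongr
  exact ENNReal.le_of_add_le_add_right hfinS h2
end

section
/- (Exponential smoothing certificate) Fix λ > 0 and let ε₀ have m i.i.d. coordinates distributed Exp(rate λ) on ℝ_{≥0}^m, and let ε₁ = α + ε₀ for α ∈ ℝ_{≥0}^m. Let h : X → [0,1]^C be measurable, φ a transform, g^ε(x) = E[h(φ(x,ε))], and suppose g^{ε₀}(x)_{k_A} ≥ p_A ≥ p_B ≥ max_{k ≠ k_A} g^{ε₀}(x)_k. If ‖α‖₁ < −log(1 − p_A + p_B)/λ, then g^{ε₁}(x)_{k_A} > max_{k ≠ k_A} g^{ε₁}(x)_k. -/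
/-!
The exponential distribution is memoryless: translating `ε₀` by `α ≥ 0` gives the law of `ε₀`
conditioned on the event `S = {ε₀ ≥ α}`, which has probability `q = exp (-λ ‖α‖₁)`. Hence
`g^{ε₁}(x)_k = q⁻¹ ∫_S h_k`. So every `k ≠ k_A` scores at most `pB / q`, while `k_A`, which loses
at most the mass `1 - q` outside `S`, scores at least `(pA - (1 - q)) / q`; the radius condition
amounts to `1 - pA + pB < q`.
-/

open MeasureTheory

/-- The exponential distribution with rate `lam`, as a measure on `ℝ`. -/
noncomputable def expMeas (lam : ℝ) : Measure ℝ :=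
  volume.withDensity fun z =>
    ENNReal.ofReal (if 0 ≤ z then lam * Real.exp (-(lam * z)) else 0)

open ProbabilityTheory Set Real

theorem MeasureTheory.Measure.map_const_add_withDensity {G : Type*} [MeasurableSpace G]
    [AddGroup G] [MeasurableAdd G] (μ : Measure G) [μ.IsAddLeftInvariant] (f : G → ENNReal) (a : G) :
    (μ.withDensity f).map (a + ·) = μ.withDensity fun w => f (-a + w) := by
  ext s hs
  rw [Measure.map_apply (measurable_const_add a) hs, withDensity_apply _ hs,
    withDensity_apply _ (measurable_const_add a hs),
    ← (measurePreserving_add_left μ a).setLIntegral_comp_preimage_emb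
      (measurableEmbedding_addLeft a) (fun w => f (-a + w)) s]
  simp only [neg_add_cancel_left]

theorem expMeas_eq_withDensity_exponentialPDF (lam : ℝ) :
    expMeas lam = volume.withDensity (exponentialPDF lam) := by
  simp only [expMeas, ← exponentialPDF_eq]

theorem isProbabilityMeasure_expMeas {lam : ℝ} (hlam : 0 < lam) :
    IsProbabilityMeasure (expMeas lam) := by
  constructor
  rw [expMeas_eq_withDensity_exponentialPDF, withDensity_apply _ MeasurableSet.univ,
    Measure.restrict_univ, lintegral_exponentialPDF_eq_one hlam]

theorem map_const_add_expMeas (lam : ℝ) {a : ℝ} (ha : 0 ≤ a) :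
    (expMeas lam).map (a + ·) =
      ENNReal.ofReal (exp (lam * a)) • (expMeas lam).restrict (Ici a) := by
  rw [expMeas_eq_withDensity_exponentialPDF, Measure.map_const_add_withDensity,
    restrict_withDensity measurableSet_Ici, ← withDensity_indicator measurableSet_Ici,
    ← withDensity_smul' _ _ ENNReal.ofReal_ne_top]
  congr 1
  funext w
  rcases lt_or_ge w a with hw | hw
  · rw [Pi.smul_apply, indicator_of_notMem (notMem_Ici.mpr hw), smul_zero,
      exponentialPDF_of_neg (by linarith)]
  · rw [Pi.smul_apply, indicator_of_mem (mem_Ici.mpr hw), exponentialPDF_of_nonneg (by linarith),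
      exponentialPDF_of_nonneg (by linarith), smul_eq_mul, ← ENNReal.ofReal_mul (exp_nonneg _)]
    congr 1
    rw [mul_left_comm, ← exp_add]
    ring_nf

theorem MeasureTheory.Measure.map_const_add_pi {ι : Type*} [Fintype ι] {X : ι → Type*}
    [∀ i, MeasurableSpace (X i)] [∀ i, Add (X i)] [∀ i, MeasurableAdd (X i)]
    {μ : ∀ i, Measure (X i)} [∀ i, IsFiniteMeasure (μ i)] {a : ∀ i, X i}
    {c : ι → ENNReal} {s : ∀ i, Set (X i)}
    (h : ∀ i, (μ i).map (a i + ·) = c i • (μ i).restrict (s i)) :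
    (Measure.pi μ).map (a + ·) = (∏ i, c i) • (Measure.pi μ).restrict (univ.pi s) := by
  rw [show (a + ·) = fun x i => a i + x i from rfl,
    Measure.pi_map_pi fun i => (measurable_const_add (a i)).aemeasurable]
  refine Measure.pi_eq fun t ht => ?_
  rw [Measure.smul_apply, Measure.restrict_apply (MeasurableSet.univ_pi ht), ← pi_inter_distrib,
    Measure.pi_pi, smul_eq_mul, ← Finset.prod_mul_distrib]
  refine Finset.prod_congr rfl fun i _ => ?_
  rw [h i, Measure.smul_apply, Measure.restrict_apply (ht i), smul_eq_mul]

theorem map_const_add_pi_expMeas {ι : Type*} [Fintype ι] {lam : ℝ} (hlam : 0 < lam)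
    {a : ι → ℝ} (ha : ∀ i, 0 ≤ a i) :
    (Measure.pi fun _ : ι => expMeas lam).map (a + ·) =
      ENNReal.ofReal (exp (lam * ∑ i, a i)) •
        (Measure.pi fun _ : ι => expMeas lam).restrict (univ.pi fun i => Ici (a i)) := by
  have := isProbabilityMeasure_expMeas hlam
  rw [Measure.map_const_add_pi fun i => map_const_add_expMeas lam (ha i),
    ← ENNReal.ofReal_prod_of_nonneg fun i _ => (exp_pos _).le, ← exp_sum, Finset.mul_sum]

section SmoothingCertificate

variable {Ω : Type*} [MeasurableSpace Ω] {P : Measure Ω} {T : Ω → Ω} {S : Set Ω} {c : ℝ}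

theorem integral_comp_eq_mul_setIntegral_of_map_eq_smul_restrict (hc : 0 ≤ c)
    (hT : Measurable T) (hmap : P.map T = ENNReal.ofReal c • P.restrict S) {f : Ω → ℝ}
    (hf : Measurable f) :
    ∫ ω, f (T ω) ∂P = c * ∫ ω in S, f ω ∂P := by
  rw [← integral_map hT.aemeasurable hf.aestronglyMeasurable, hmap, integral_smul_measure,
    ENNReal.toReal_ofReal hc, smul_eq_mul]

theorem measureReal_eq_inv_of_map_eq_smul_restrict [IsProbabilityMeasure P] (hc : 0 ≤ c)
    (hT : Measurable T) (hmap : P.map T = ENNReal.ofReal c • P.restrict S) :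
    P.real S = c⁻¹ := by
  have := Measure.isProbabilityMeasure_map (μ := P) hT.aemeasurable
  have hmass : (P.map T).real univ = 1 := probReal_univ
  rw [hmap, measureReal_ennreal_smul_apply, measureReal_restrict_apply_univ,
    ENNReal.toReal_ofReal hc] at hmass
  exact eq_inv_of_mul_eq_one_right hmass

theorem integral_sub_measureReal_compl_le_setIntegral [IsFiniteMeasure P] (hS : MeasurableSet S)
    {f : Ω → ℝ} (hf : Integrable f P) (hf1 : ∀ ω, f ω ≤ 1) :
    ∫ ω, f ω ∂P - P.real Sᶜ ≤ ∫ ω in S, f ω ∂P := by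
  have hcompl : ∫ ω in Sᶜ, f ω ∂P ≤ P.real Sᶜ :=
    calc ∫ ω in Sᶜ, f ω ∂P ≤ ∫ _ in Sᶜ, (1 : ℝ) ∂P :=
          setIntegral_mono hf.integrableOn (integrableOn_const (by simp)) hf1
      _ = P.real Sᶜ := by simp
  linarith [integral_add_compl hS hf]

theorem integral_comp_lt_of_map_eq_smul_restrict [IsProbabilityMeasure P] (hc : 0 < c)
    (hT : Measurable T) (hS : MeasurableSet S) (hmap : P.map T = ENNReal.ofReal c • P.restrict S)
    {f g : Ω → ℝ} (hf : Measurable f) (hg : Measurable g) (hf01 : ∀ ω, f ω ∈ Icc 0 1)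
    (hg01 : ∀ ω, g ω ∈ Icc 0 1) {pA pB : ℝ} (hA : pA ≤ ∫ ω, f ω ∂P) (hB : ∫ ω, g ω ∂P ≤ pB)
    (hrad : c * (1 - pA + pB) < 1) :
    ∫ ω, g (T ω) ∂P < ∫ ω, f (T ω) ∂P := by
  have integrable {u : Ω → ℝ} (hu : Measurable u) (hu01 : ∀ ω, u ω ∈ Icc 0 1) :
      Integrable u P :=
    .of_bound hu.aestronglyMeasurable 1 <| ae_of_all _ fun ω => by
      rw [Real.norm_eq_abs, abs_le]
      exact ⟨by linarith [(hu01 ω).1], (hu01 ω).2⟩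
  have hgS : ∫ ω in S, g ω ∂P ≤ ∫ ω, g ω ∂P :=
    setIntegral_le_integral (integrable hg hg01) (ae_of_all _ fun ω => (hg01 ω).1)
  have hfS := integral_sub_measureReal_compl_le_setIntegral hS (integrable hf hf01)
    fun ω => (hf01 ω).2
  rw [probReal_compl_eq_one_sub hS, measureReal_eq_inv_of_map_eq_smul_restrict hc.le hT hmap]
    at hfS
  rw [integral_comp_eq_mul_setIntegral_of_map_eq_smul_restrict hc.le hT hmap hg,
    integral_comp_eq_mul_setIntegral_of_map_eq_smul_restrict hc.le hT hmap hf]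
  calc c * ∫ ω in S, g ω ∂P ≤ c * pB := mul_le_mul_of_nonneg_left (hgS.trans hB) hc.le
    _ < c * (pA - (1 - c⁻¹)) := by
      rw [mul_sub, mul_sub, mul_inv_cancel₀ hc.ne']
      linarith
    _ ≤ c * ∫ ω in S, f ω ∂P := mul_le_mul_of_nonneg_left (by linarith) hc.le

end SmoothingCertificate

theorem exp_mul_mul_lt_one_of_lt_neg_log_div {lam A t : ℝ} (hlam : 0 < lam)
    (h : A < -log t / lam) : exp (lam * A) * t < 1 := by
  rcases le_or_gt t 0 with ht | ht
  · nlinarith [exp_pos (lam * A)]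
  · have hA : lam * A < -log t := by rwa [lt_div_iff₀ hlam, mul_comm] at h
    calc exp (lam * A) * t < exp (-log t) * t := mul_lt_mul_of_pos_right (exp_lt_exp.mpr hA) ht
      _ = 1 := by rw [exp_neg, exp_log ht, inv_mul_cancel₀ ht.ne']

theorem stmt_5_general {X : Type*} [MeasurableSpace X] {m C : ℕ}
    (lam : ℝ) (hlam : 0 < lam)
    (h : X → Fin C → ℝ) (hhb : ∀ y k, h y k ∈ Set.Icc (0 : ℝ) 1)
    (φ : X → (Fin m → ℝ) → X) (x : X)
    (α : Fin m → ℝ) (hα : ∀ i, 0 ≤ α i)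
    (P : Measure (Fin m → ℝ))
    (hP : P = Measure.pi fun _ : Fin m => expMeas lam)
    (hmeas : ∀ k, Measurable fun z : Fin m → ℝ => h (φ x z) k)
    (g₀ g₁ : Fin C → ℝ)
    (hg₀ : g₀ = fun k => ∫ z, h (φ x z) k ∂P)
    (hg₁ : g₁ = fun k => ∫ z, h (φ x (α + z)) k ∂P)
    (kA : Fin C) (pA pB : ℝ)
    (hconfA : pA ≤ g₀ kA) (hconfB : ∀ k, k ≠ kA → g₀ k ≤ pB)
    (hrad : ∑ i, |α i| < -Real.log (1 - pA + pB) / lam) :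
    ∀ k, k ≠ kA → g₁ k < g₁ kA := by
  intro k hk
  subst hP hg₀ hg₁
  have := isProbabilityMeasure_expMeas hlam
  have hnorm : ∑ i, |α i| = ∑ i, α i := Finset.sum_congr rfl fun i _ => abs_of_nonneg (hα i)
  exact integral_comp_lt_of_map_eq_smul_restrict (exp_pos _) (measurable_const_add α)
    (MeasurableSet.univ_pi fun i => measurableSet_Ici) (map_const_add_pi_expMeas hlam hα)
    (hmeas kA) (hmeas k) (fun _ => hhb _ _) (fun _ => hhb _ _) hconfA (hconfB k hk)
    (exp_mul_mul_lt_one_of_lt_neg_log_div hlam (hnorm ▸ hrad))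

/-- exponential smoothing certificate. -/
theorem stmt_5 {X : Type*} [MeasurableSpace X] {m C : ℕ} (hC : 2 ≤ C)
    (lam : ℝ) (hlam : 0 < lam)
    (h : X → Fin C → ℝ) (hhb : ∀ y k, h y k ∈ Set.Icc (0 : ℝ) 1)
    (φ : X → (Fin m → ℝ) → X) (x : X)
    (α : Fin m → ℝ) (hα : ∀ i, 0 ≤ α i)
    (P : Measure (Fin m → ℝ))
    (hP : P = Measure.pi fun _ : Fin m => expMeas lam)
    (hmeas : ∀ k, Measurable fun z : Fin m → ℝ => h (φ x z) k)
    (g₀ g₁ : Fin C → ℝ)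
    (hg₀ : g₀ = fun k => ∫ z, h (φ x z) k ∂P)
    (hg₁ : g₁ = fun k => ∫ z, h (φ x (α + z)) k ∂P)
    (kA : Fin C) (pA pB : ℝ)
    (hpB0 : 0 ≤ pB) (hpA1 : pA ≤ 1) (hAB : pB ≤ pA)
    (hconfA : pA ≤ g₀ kA) (hconfB : ∀ k, k ≠ kA → g₀ k ≤ pB)
    (hrad : ∑ i, |α i| < -Real.log (1 - pA + pB) / lam) :
    ∀ k, k ≠ kA → g₁ k < g₁ kA :=
  stmt_5_general lam hlam h hhb φ x α hα P hP hmeas g₀ g₁ hg₀ hg₁ kA pA pB hconfA hconfB hrad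
end

section
/- (Uniform smoothing certificate) Let ε₀ be uniform on [a,b]^m (a < b) and ε₁ = α + ε₀ for α ∈ ℝ^m. Let h : X → [0,1]^C be measurable, φ a transform, g^ε(x) = E[h(φ(x,ε))], and suppose g^{ε₀}(x)_{k_A} ≥ p_A ≥ p_B ≥ max_{k ≠ k_A} g^{ε₀}(x)_k. If 1 − (p_A − p_B)/2 < ∏_{i=1}^m max(1 − |α_i|/(b−a), 0), then g^{ε₁}(x)_{k_A} > max_{k ≠ k_A} g^{ε₁}(x)_k. -/
/-! Translating the uniform product measure by `α` does not change its restriction to the overlap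
box `∏ᵢ [a, b] ∩ [a + αᵢ, b + αᵢ]`, whose mass is `ρ = ∏ᵢ (1 - |αᵢ| / (b - a))₊`. As `h` takes
values in `[0, 1]`, every class score then moves by at most `1 - ρ` under the shift, and
`2 (1 - ρ) < p_A - p_B` keeps class `k_A` strictly ahead. -/

open MeasureTheory Set

noncomputable def unifMeas (a b : ℝ) : Measure ℝ :=
  (ENNReal.ofReal (b - a))⁻¹ • volume.restrict (Set.Icc a b)

theorem abs_integral_sub_integral_le_of_restrict_eq {Ω : Type*} [MeasurableSpace Ω]
    {μ ν : Measure Ω} [IsProbabilityMeasure μ] [IsProbabilityMeasure ν] {s : Set Ω}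
    (hs : MeasurableSet s) (hμν : μ.restrict s = ν.restrict s) {f : Ω → ℝ}
    (hf : Measurable f) (hf0 : ∀ ω, 0 ≤ f ω) (hf1 : ∀ ω, f ω ≤ 1) :
    |∫ ω, f ω ∂μ - ∫ ω, f ω ∂ν| ≤ 1 - μ.real s := by
  have hint : ∀ ρ : Measure Ω, [IsFiniteMeasure ρ] → Integrable f ρ := fun ρ _ =>
    (integrable_const (1 : ℝ)).mono' hf.aestronglyMeasurable
      (.of_forall fun ω => by simpa [abs_of_nonneg (hf0 ω)] using hf1 ω)
  have hreal : ν.real s = μ.real s := by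
    simp only [measureReal_def, ← Measure.restrict_apply_univ s, hμν]
  have hsplit : ∀ ρ : Measure Ω, [IsProbabilityMeasure ρ] → ρ.real s = μ.real s →
      ∫ ω in s, f ω ∂ρ ≤ ∫ ω, f ω ∂ρ ∧ ∫ ω, f ω ∂ρ ≤ ∫ ω in s, f ω ∂ρ + (1 - μ.real s) := by
    intro ρ _ hρ
    refine ⟨setIntegral_le_integral (hint ρ) (.of_forall hf0), ?_⟩
    rw [← integral_add_compl hs (hint ρ), ← hρ, ← probReal_compl_eq_one_sub hs]
    gcongr
    calc ∫ ω in sᶜ, f ω ∂ρ ≤ ∫ _ in sᶜ, (1 : ℝ) ∂ρ :=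
          setIntegral_mono (hint ρ).integrableOn (integrable_const 1) hf1
      _ = ρ.real sᶜ := by simp
  obtain ⟨hμ₁, hμ₂⟩ := hsplit μ rfl
  obtain ⟨hν₁, hν₂⟩ := hsplit ν hreal
  rw [hμν] at hμ₁ hμ₂
  exact abs_sub_le_iff.2 ⟨by linarith, by linarith⟩

theorem MeasureTheory.Measure.restrict_univ_pi_eq_of_restrict_eq {ι : Type*} [Fintype ι] {X : ι → Type*}
    [∀ i, MeasurableSpace (X i)] {μ ν : ∀ i, Measure (X i)} [∀ i, SigmaFinite (μ i)]
    [∀ i, SigmaFinite (ν i)] {s : ∀ i, Set (X i)}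
    (h : ∀ i, (μ i).restrict (s i) = (ν i).restrict (s i)) :
    (Measure.pi μ).restrict (univ.pi s) = (Measure.pi ν).restrict (univ.pi s) := by
  rw [Measure.restrict_pi_pi, Measure.restrict_pi_pi, funext h]

theorem isProbabilityMeasure_unifMeas {a b : ℝ} (hab : a < b) :
    IsProbabilityMeasure (unifMeas a b) := by
  constructor
  rw [unifMeas, Measure.smul_apply, Measure.restrict_apply_univ, Real.volume_Icc, smul_eq_mul,
    ENNReal.inv_mul_cancel (by simpa using hab) ENNReal.ofReal_ne_top]

theorem unifMeas_restrict (a b : ℝ) {s : Set ℝ} (hs : MeasurableSet s) :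
    (unifMeas a b).restrict s = (ENNReal.ofReal (b - a))⁻¹ • volume.restrict (s ∩ Icc a b) := by
  rw [unifMeas, Measure.restrict_smul, Measure.restrict_restrict hs]

theorem map_const_add_unifMeas (a b t : ℝ) :
    (unifMeas a b).map (t + ·) = unifMeas (a + t) (b + t) := by
  have hpre : (t + ·) ⁻¹' Icc (a + t) (b + t) = Icc a b := by
    simp [preimage_const_add_Icc]
  rw [unifMeas, unifMeas, Measure.map_smul, ← hpre, ← Measure.restrict_map (measurable_const_add t)
    measurableSet_Icc, Measure.IsAddLeftInvariant.map_add_left_eq_self, add_sub_add_right_eq_sub]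

theorem unifMeas_restrict_inter_eq {a b a' b' : ℝ} (h : b - a = b' - a') :
    (unifMeas a b).restrict (Icc a b ∩ Icc a' b') =
      (unifMeas a' b').restrict (Icc a b ∩ Icc a' b') := by
  rw [unifMeas_restrict _ _ (measurableSet_Icc.inter measurableSet_Icc),
    unifMeas_restrict _ _ (measurableSet_Icc.inter measurableSet_Icc), h,
    inter_eq_left.2 inter_subset_left, inter_eq_left.2 inter_subset_right]

theorem map_const_add_pi_unifMeas {ι : Type*} [Fintype ι] {a b : ℝ} (hab : a < b) (α : ι → ℝ) :
    (Measure.pi fun _ : ι => unifMeas a b).map (α + ·) =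
      Measure.pi fun i => unifMeas (a + α i) (b + α i) := by
  have := isProbabilityMeasure_unifMeas hab
  have hmap := Measure.pi_map_pi (μ := fun _ => unifMeas a b) (f := fun i => (α i + ·))
    fun i => (measurable_const_add (α i)).aemeasurable
  simp only [map_const_add_unifMeas] at hmap
  exact hmap

theorem unifMeas_real_inter_Icc_add {a b : ℝ} (hab : a < b) (t : ℝ) :
    (unifMeas a b).real (Icc a b ∩ Icc (a + t) (b + t)) = max (1 - |t| / (b - a)) 0 := by
  have hba : 0 < b - a := sub_pos.2 hab
  have hlen : min b (b + t) - max a (a + t) = b - a - |t| := by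
    have := max_sub_min_eq_abs (0 : ℝ) t
    rw [sub_zero] at this
    nth_rewrite 1 [← add_zero a, ← add_zero b]
    rw [min_add_add_left, max_add_add_left]
    linarith
  rw [measureReal_def, unifMeas, Measure.smul_apply, Measure.restrict_apply
    (measurableSet_Icc.inter measurableSet_Icc), inter_eq_left.2 inter_subset_left, Icc_inter_Icc,
    Real.volume_Icc, hlen, smul_eq_mul, ← ENNReal.div_eq_inv_mul,
    ← ENNReal.ofReal_div_of_pos hba, ENNReal.toReal_ofReal', sub_div, div_self hba.ne']

theorem stmt_7_general {X : Type*} {m C : ℕ}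
    (a b : ℝ) (hab : a < b)
    (h : X → Fin C → ℝ) (hhb : ∀ y k, h y k ∈ Set.Icc (0 : ℝ) 1)
    (φ : X → (Fin m → ℝ) → X) (x : X) (α : Fin m → ℝ)
    (P : Measure (Fin m → ℝ))
    (hP : P = Measure.pi fun _ : Fin m => unifMeas a b)
    (hmeas : ∀ k, Measurable fun z : Fin m → ℝ => h (φ x z) k)
    (g₀ g₁ : Fin C → ℝ)
    (hg₀ : g₀ = fun k => ∫ z, h (φ x z) k ∂P)
    (hg₁ : g₁ = fun k => ∫ z, h (φ x (α + z)) k ∂P)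
    (kA : Fin C) (pA pB : ℝ)
    (hconfA : pA ≤ g₀ kA) (hconfB : ∀ k, k ≠ kA → g₀ k ≤ pB)
    (hrad : 1 - (pA - pB) / 2 < ∏ i, max (1 - |α i| / (b - a)) 0) :
    ∀ k, k ≠ kA → g₁ k < g₁ kA := by
  subst hP
  have := isProbabilityMeasure_unifMeas hab
  have (i : Fin m) := isProbabilityMeasure_unifMeas (a := a + α i) (b := b + α i) (by linarith)
  set s : Fin m → Set ℝ := fun i => Icc a b ∩ Icc (a + α i) (b + α i)
  have hagree : (Measure.pi fun _ => unifMeas a b).restrict (univ.pi s) =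
      (Measure.pi fun i => unifMeas (a + α i) (b + α i)).restrict (univ.pi s) :=
    Measure.restrict_univ_pi_eq_of_restrict_eq fun i => unifMeas_restrict_inter_eq (by ring)
  have hoverlap : (Measure.pi fun _ => unifMeas a b).real (univ.pi s) =
      ∏ i, max (1 - |α i| / (b - a)) 0 := by
    rw [measureReal_def, Measure.pi_pi, ENNReal.toReal_prod]
    simp_rw [← measureReal_def, s, unifMeas_real_inter_Icc_add hab]
  have hclose : ∀ k, |g₀ k - g₁ k| ≤ 1 - ∏ i, max (1 - |α i| / (b - a)) 0 := fun k => by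
    rw [hg₀, hg₁, ← hoverlap]
    dsimp only
    rw [← integral_map (measurable_const_add α).aemeasurable (hmeas k).aestronglyMeasurable,
      map_const_add_pi_unifMeas hab]
    exact abs_integral_sub_integral_le_of_restrict_eq
      (.univ_pi fun _ => measurableSet_Icc.inter measurableSet_Icc) hagree (hmeas k)
      (fun z => (hhb _ k).1) (fun z => (hhb _ k).2)
  intro k hk
  have hk_close := abs_le.1 (hclose k)
  have hkA_close := abs_le.1 (hclose kA)
  linarith [hconfB k hk]

/-- uniform smoothing certificate. -/
theorem stmt_7 {X : Type*} [MeasurableSpace X] {m C : ℕ} (hC : 2 ≤ C)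
    (a b : ℝ) (hab : a < b)
    (h : X → Fin C → ℝ) (hhb : ∀ y k, h y k ∈ Set.Icc (0 : ℝ) 1)
    (φ : X → (Fin m → ℝ) → X) (x : X) (α : Fin m → ℝ)
    (P : Measure (Fin m → ℝ))
    (hP : P = Measure.pi fun _ : Fin m => unifMeas a b)
    (hmeas : ∀ k, Measurable fun z : Fin m → ℝ => h (φ x z) k)
    (g₀ g₁ : Fin C → ℝ)
    (hg₀ : g₀ = fun k => ∫ z, h (φ x z) k ∂P)
    (hg₁ : g₁ = fun k => ∫ z, h (φ x (α + z)) k ∂P)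
    (kA : Fin C) (pA pB : ℝ)
    (hpB0 : 0 ≤ pB) (hpA1 : pA ≤ 1) (hAB : pB ≤ pA)
    (hconfA : pA ≤ g₀ kA) (hconfB : ∀ k, k ≠ kA → g₀ k ≤ pB)
    (hrad : 1 - (pA - pB) / 2 < ∏ i, max (1 - |α i| / (b - a)) 0) :
    ∀ k, k ≠ kA → g₁ k < g₁ kA :=
  stmt_7_general a b hab h hhb φ x α P hP hmeas g₀ g₁ hg₀ hg₁ kA pA pB hconfA hconfB hrad
end

section
/- (Laplace smoothing certificate, one-dimensional) Let ε₀ ~ Laplace(0, b) with scale b > 0 and ε₁ = α + ε₀ for α ∈ ℝ. Let h : X → [0,1]^C be measurable, φ a transform, g^ε(x) = E[h(φ(x,ε))], and suppose g^{ε₀}(x)_{k_A} ≥ p_A ≥ p_B ≥ max_{k ≠ k_A} g^{ε₀}(x)_k with p_A > 1/2 and p_B < 1/2. If |α| < −b·log(1 − p_A + p_B), then g^{ε₁}(x)_{k_A} > max_{k ≠ k_A} g^{ε₁}(x)_k. -/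
/-!
Translating the noise by `α` multiplies the Laplace density pointwise by at most `exp (|α| / b)`,
so for every `[0, 1]`-valued score `f` both `E f(α + ε)` and `E (1 - f)(α + ε)` are at most
`exp (|α| / b)` times their values at `α = 0`. Hence the top class keeps probability at least
`1 - exp (|α| / b) (1 - p_A)` and every other class gets at most `exp (|α| / b) p_B`, while the
radius condition gives `exp (|α| / b) (1 - p_A + p_B) < 1`.
-/

open MeasureTheory Real Set
open scoped ENNReal

/-- The Laplace distribution with mean `0` and scale `b`, as a measure on `ℝ`. -/
noncomputable def laplaceMeas (b : ℝ) : Measure ℝ :=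
  volume.withDensity fun z => ENNReal.ofReal ((1 / (2 * b)) * Real.exp (-|z| / b))

noncomputable def laplacePDF (b z : ℝ) : ℝ :=
  1 / (2 * b) * exp (-|z| / b)

lemma laplaceMeas_eq_withDensity (b : ℝ) :
    laplaceMeas b = volume.withDensity fun z => ENNReal.ofReal (laplacePDF b z) :=
  rfl

@[fun_prop]
lemma measurable_laplacePDF (b : ℝ) : Measurable (laplacePDF b) := by
  unfold laplacePDF
  fun_prop

lemma laplacePDF_nonneg {b : ℝ} (hb : 0 ≤ b) (z : ℝ) : 0 ≤ laplacePDF b z := by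
  unfold laplacePDF
  positivity

lemma integral_laplacePDF {b : ℝ} (hb : 0 < b) : ∫ z, laplacePDF b z = 1 := by
  have h_exp : ∫ z in Ioi (0 : ℝ), exp (-z / b) = b := by
    have h := integral_exp_mul_Ioi (neg_lt_zero.2 (inv_pos.2 hb)) 0
    rw [mul_zero, exp_zero, neg_div_neg_eq, one_div, inv_inv] at h
    convert h using 3 with z
    rw [neg_div, neg_mul, div_eq_inv_mul]
  simp only [laplacePDF]
  rw [integral_const_mul, integral_comp_abs (f := fun z => exp (-z / b)), h_exp]
  field_simp

lemma integrable_laplacePDF {b : ℝ} (hb : 0 < b) : Integrable (laplacePDF b) :=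
  .of_integral_ne_zero (by simp [integral_laplacePDF hb])

lemma isProbabilityMeasure_laplaceMeas {b : ℝ} (hb : 0 < b) :
    IsProbabilityMeasure (laplaceMeas b) := by
  constructor
  rw [laplaceMeas_eq_withDensity, withDensity_apply _ MeasurableSet.univ, Measure.restrict_univ,
    ← ofReal_integral_eq_lintegral_ofReal (integrable_laplacePDF hb)
      (ae_of_all _ (laplacePDF_nonneg hb.le)), integral_laplacePDF hb, ENNReal.ofReal_one]

lemma laplacePDF_sub_le {b : ℝ} (hb : 0 ≤ b) (u α : ℝ) :
    laplacePDF b (u - α) ≤ exp (|α| / b) * laplacePDF b u := by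
  have h_exp : exp (-|u - α| / b) ≤ exp (|α| / b) * exp (-|u| / b) := by
    rw [← exp_add, ← add_div]
    gcongr
    linarith [abs_sub_abs_le_abs_sub u α]
  unfold laplacePDF
  calc 1 / (2 * b) * exp (-|u - α| / b)
      ≤ 1 / (2 * b) * (exp (|α| / b) * exp (-|u| / b)) := by gcongr
    _ = exp (|α| / b) * (1 / (2 * b) * exp (-|u| / b)) := by ring

lemma lintegral_laplaceMeas_comp_add_left_le {b : ℝ} (hb : 0 ≤ b) (α : ℝ) {f : ℝ → ℝ≥0∞}
    (hf : Measurable f) :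
    ∫⁻ z, f (α + z) ∂laplaceMeas b ≤ ENNReal.ofReal (exp (|α| / b)) * ∫⁻ z, f z ∂laplaceMeas b := by
  set ρ : ℝ → ℝ≥0∞ := fun z => ENNReal.ofReal (laplacePDF b z)
  have hρ : Measurable ρ := (measurable_laplacePDF b).ennreal_ofReal
  rw [laplaceMeas_eq_withDensity, lintegral_withDensity_eq_lintegral_mul _ hρ (by fun_prop),
    lintegral_withDensity_eq_lintegral_mul _ hρ hf, ← lintegral_const_mul _ (hρ.mul hf)]
  calc ∫⁻ z, ρ z * f (α + z)
      = ∫⁻ z, ρ (α + z - α) * f (α + z) := by simp_rw [add_sub_cancel_left]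
    _ = ∫⁻ u, ρ (u - α) * f u := lintegral_add_left_eq_self (fun u => ρ (u - α) * f u) α
    _ ≤ ∫⁻ u, ENNReal.ofReal (exp (|α| / b)) * (ρ u * f u) := by
      refine lintegral_mono fun u => ?_
      rw [← mul_assoc, ← ENNReal.ofReal_mul (exp_nonneg _)]
      exact mul_le_mul_left (ENNReal.ofReal_le_ofReal (laplacePDF_sub_le hb u α)) _

lemma integral_laplaceMeas_comp_add_left_le {b : ℝ} (hb : 0 ≤ b) (α : ℝ) {f : ℝ → ℝ}
    (hf : Measurable f) (hf₀ : 0 ≤ f) (hfi : Integrable f (laplaceMeas b)) :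
    ∫ z, f (α + z) ∂laplaceMeas b ≤ exp (|α| / b) * ∫ z, f z ∂laplaceMeas b := by
  rw [integral_eq_lintegral_of_nonneg_ae (f := fun z => f (α + z))
      (ae_of_all _ fun z => hf₀ (α + z)) (hf.comp (measurable_const_add α)).aestronglyMeasurable,
    integral_eq_lintegral_of_nonneg_ae (ae_of_all _ hf₀) hf.aestronglyMeasurable,
    ← ENNReal.toReal_ofReal (exp_nonneg _), ← ENNReal.toReal_mul]
  exact ENNReal.toReal_mono (ENNReal.mul_ne_top ENNReal.ofReal_ne_top hfi.lintegral_lt_top.ne)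
    (lintegral_laplaceMeas_comp_add_left_le hb α hf.ennreal_ofReal)

lemma integrable_of_forall_mem_Icc {Ω : Type*} [MeasurableSpace Ω] {μ : Measure Ω}
    [IsFiniteMeasure μ] {f : Ω → ℝ} (hf : Measurable f) (hf₀₁ : ∀ ω, f ω ∈ Icc 0 1) :
    Integrable f μ :=
  .of_bound hf.aestronglyMeasurable 1 <| ae_of_all _ fun ω =>
    abs_le.2 ⟨by linarith [(hf₀₁ ω).1], (hf₀₁ ω).2⟩

lemma one_sub_integral_laplaceMeas_comp_add_left_le {b : ℝ} (hb : 0 < b) (α : ℝ) {f : ℝ → ℝ}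
    (hf : Measurable f) (hf₀₁ : ∀ z, f z ∈ Icc 0 1) :
    1 - ∫ z, f (α + z) ∂laplaceMeas b ≤ exp (|α| / b) * (1 - ∫ z, f z ∂laplaceMeas b) := by
  have := isProbabilityMeasure_laplaceMeas hb
  have hfi := integrable_of_forall_mem_Icc (μ := laplaceMeas b) hf hf₀₁
  have hfαi : Integrable (fun z => f (α + z)) (laplaceMeas b) :=
    integrable_of_forall_mem_Icc (hf.comp (measurable_const_add α)) fun z => hf₀₁ (α + z)
  have key := integral_laplaceMeas_comp_add_left_le hb.le α (f := fun z => 1 - f z) (by fun_prop)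
    (fun z => sub_nonneg.2 (hf₀₁ z).2) ((integrable_const 1).sub hfi)
  rw [integral_sub (integrable_const 1) hfαi, integral_sub (integrable_const 1) hfi] at key
  simpa using key

lemma exp_div_mul_lt_one_of_lt_neg_mul_log {b t q : ℝ} (hb : 0 < b) (h : t < -(b * log q)) :
    exp (t / b) * q < 1 := by
  rcases le_or_gt q 0 with hq | hq
  · nlinarith [exp_pos (t / b)]
  have ht : t / b < -log q := by
    rw [div_lt_iff₀ hb]
    linarith
  calc exp (t / b) * q < exp (-log q) * q := by gcongr
    _ = 1 := by rw [exp_neg, exp_log hq, inv_mul_cancel₀ hq.ne']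

theorem stmt_9_general {X : Type*} {C : ℕ}
    (b : ℝ) (hb : 0 < b)
    (h : X → Fin C → ℝ) (hhb : ∀ y k, h y k ∈ Set.Icc (0 : ℝ) 1)
    (φ : X → ℝ → X) (x : X) (α : ℝ)
    (hmeas : ∀ k, Measurable fun z : ℝ => h (φ x z) k)
    (g₀ g₁ : Fin C → ℝ)
    (hg₀ : g₀ = fun k => ∫ z, h (φ x z) k ∂(laplaceMeas b))
    (hg₁ : g₁ = fun k => ∫ z, h (φ x (α + z)) k ∂(laplaceMeas b))
    (kA : Fin C) (pA pB : ℝ)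
    (hconfA : pA ≤ g₀ kA) (hconfB : ∀ k, k ≠ kA → g₀ k ≤ pB)
    (hrad : |α| < -(b * Real.log (1 - pA + pB))) :
    ∀ k, k ≠ kA → g₁ k < g₁ kA := by
  intro k hk
  have := isProbabilityMeasure_laplaceMeas hb
  have h_other : g₁ k ≤ exp (|α| / b) * g₀ k := by
    subst hg₀ hg₁
    exact integral_laplaceMeas_comp_add_left_le hb.le α (hmeas k) (fun z => (hhb _ k).1)
      (integrable_of_forall_mem_Icc (hmeas k) fun z => hhb _ k)
  have h_top : 1 - g₁ kA ≤ exp (|α| / b) * (1 - g₀ kA) := by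
    subst hg₀ hg₁
    exact one_sub_integral_laplaceMeas_comp_add_left_le hb α (hmeas kA) fun z => hhb _ kA
  have h_radius := exp_div_mul_lt_one_of_lt_neg_mul_log hb hrad
  nlinarith [hconfB k hk, exp_pos (|α| / b)]

/-- Laplace smoothing certificate (one-dimensional). -/
theorem stmt_9 {X : Type*} [MeasurableSpace X] {C : ℕ} (hC : 2 ≤ C)
    (b : ℝ) (hb : 0 < b)
    (h : X → Fin C → ℝ) (hhb : ∀ y k, h y k ∈ Set.Icc (0 : ℝ) 1)
    (φ : X → ℝ → X) (x : X) (α : ℝ)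
    (hmeas : ∀ k, Measurable fun z : ℝ => h (φ x z) k)
    (g₀ g₁ : Fin C → ℝ)
    (hg₀ : g₀ = fun k => ∫ z, h (φ x z) k ∂(laplaceMeas b))
    (hg₁ : g₁ = fun k => ∫ z, h (φ x (α + z)) k ∂(laplaceMeas b))
    (kA : Fin C) (pA pB : ℝ)
    (hpB0 : 0 ≤ pB) (hpA1 : pA ≤ 1) (hAB : pB ≤ pA)
    (hpA : 1 / 2 < pA) (hpB : pB < 1 / 2)
    (hconfA : pA ≤ g₀ kA) (hconfB : ∀ k, k ≠ kA → g₀ k ≤ pB)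
    (hrad : |α| < -(b * Real.log (1 - pA + pB))) :
    ∀ k, k ≠ kA → g₁ k < g₁ kA :=
  stmt_9_general b hb h hhb φ x α hmeas g₀ g₁ hg₀ hg₁ kA pA pB hconfA hconfB hrad
end
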